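/- Let f, g : ℝⁿ_{≥0} → ℝⁿ_{≥0} be m-topical maps, let u ∈ ℝⁿ_{>0} and set v = g(u). Then for every J ⊆ {1,…,n} and every i ∈ {1,…,n}: (f(g(u − t e_J))_i < f(g(u))_i for all sufficiently small t > 0) if and only if (f(v − s e_I)_i < f(v)_i for all sufficiently small s > 0), where I = {j ∈ {1,…,n} : g(u − t e_J)_j < g(u)_j for all sufficiently small t > 0}. In other words, the lower local signature of f∘g at u equals the composition of the lower local signature of f at v with the lower local signature of g at u. -/
import Mathlib


open Filter Set

/-- Vectors in ℝⁿ indexed by `Fin n`. -/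
abbrev Vec (n : ℕ) := Fin n → ℝ

/-- Entrywise nonnegative vector: an element of ℝⁿ_{≥0}. -/
def Nonneg {n : ℕ} (x : Vec n) : Prop := ∀ i, 0 ≤ x i

/-- Entrywise positive vector: an element of ℝⁿ_{>0}. -/
def Pos {n : ℕ} (x : Vec n) : Prop := ∀ i, 0 < x i

/-- An m-topical map: continuous on ℝⁿ_{≥0}, preserving ℝⁿ_{≥0}, order-preserving,
homogeneous of degree one, and mapping the interior ℝⁿ_{>0} into itself. -/
structure IsMTopical {n : ℕ} (f : Vec n → Vec n) : Prop where
  map_nonneg : ∀ x, Nonneg x → Nonneg (f x)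
  contOn : ContinuousOn f {x : Vec n | Nonneg x}
  mono : ∀ x y, Nonneg x → Nonneg y → x ≤ y → f x ≤ f y
  hom : ∀ c : ℝ, 0 < c → ∀ x, Nonneg x → f (c • x) = c • f x
  map_pos : ∀ x, Pos x → Pos (f x)

/-- The indicator vector `e_J` of a subset `J ⊆ [n]`. -/
noncomputable def eVec {n : ℕ} (J : Set (Fin n)) : Vec n := J.indicator fun _ => 1

/-- The all-ones vector `𝟙`. -/
def allOnes (n : ℕ) : Vec n := fun _ => 1
/-- Lower local signature of `f` at `u`: `f(u - t e_J)_i < f(u)_i` for all sufficiently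
small `t > 0`. -/
def LowerLoc {n : ℕ} (f : Vec n → Vec n) (u : Vec n) (J : Set (Fin n)) (i : Fin n) : Prop :=
  ∃ δ : ℝ, 0 < δ ∧ ∀ t : ℝ, 0 < t → t < δ → f (u - t • eVec J) i < f u i

/-! ### Auxiliary lemmas -/

open Topology

lemma eVec_mem {n : ℕ} {K : Set (Fin n)} {k : Fin n} (h : k ∈ K) : eVec K k = 1 :=
  Set.indicator_of_mem h _

lemma eVec_not_mem {n : ℕ} {K : Set (Fin n)} {k : Fin n} (h : k ∉ K) : eVec K k = 0 :=
  Set.indicator_of_notMem h _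

lemma eVec_nonneg {n : ℕ} (K : Set (Fin n)) (k : Fin n) : 0 ≤ eVec K k := by
  by_cases h : k ∈ K
  · rw [eVec_mem h]; norm_num
  · rw [eVec_not_mem h]

lemma eVec_le_one {n : ℕ} (K : Set (Fin n)) (k : Fin n) : eVec K k ≤ 1 := by
  by_cases h : k ∈ K
  · rw [eVec_mem h]
  · rw [eVec_not_mem h]; norm_num

lemma sub_eVec_apply {n : ℕ} (x : Vec n) (K : Set (Fin n)) (t : ℝ) (k : Fin n) :
    (x - t • eVec K) k = x k - t * eVec K k := rfl

lemma sub_eVec_nonneg {n : ℕ} {x : Vec n} (K : Set (Fin n)) {t : ℝ} (ht : 0 ≤ t)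
    (h : ∀ k, t ≤ x k) : Nonneg (x - t • eVec K) := by
  intro k
  have h1 : t * eVec K k ≤ t := by nlinarith [eVec_le_one K k, eVec_nonneg K k]
  have := h k
  simp only [sub_eVec_apply]; linarith

lemma sub_eVec_le {n : ℕ} (x : Vec n) (K : Set (Fin n)) {t t' : ℝ} (h : t ≤ t') :
    x - t' • eVec K ≤ x - t • eVec K := by
  intro k
  have h0 := eVec_nonneg K k
  simp only [sub_eVec_apply]
  nlinarith

lemma path_mono {n : ℕ} {g : Vec n → Vec n} (hg : IsMTopical g) (u : Vec n) (K : Set (Fin n))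
    {t t' : ℝ} (h0 : 0 ≤ t) (htt : t ≤ t') (h : ∀ k, t' ≤ u k) :
    g (u - t' • eVec K) ≤ g (u - t • eVec K) :=
  hg.mono _ _ (sub_eVec_nonneg K (h0.trans htt) h)
    (sub_eVec_nonneg K h0 fun k => htt.trans (h k)) (sub_eVec_le u K htt)

lemma path_le {n : ℕ} {g : Vec n → Vec n} (hg : IsMTopical g) (u : Vec n) (K : Set (Fin n))
    {t : ℝ} (h0 : 0 ≤ t) (h : ∀ k, t ≤ u k) :
    g (u - t • eVec K) ≤ g u := by
  have := path_mono hg u K (le_refl 0) h0 h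
  simpa using this

/-- If the lower local signature holds, strict decrease holds for *all* `t` in `(0, μ)`
where `μ` is below every entry of `u` (by monotonicity in `t`). -/
lemma lowerLoc_all {n : ℕ} {g : Vec n → Vec n} (hg : IsMTopical g) {u : Vec n}
    {K : Set (Fin n)} {j : Fin n} {μ : ℝ} (hμle : ∀ k, μ ≤ u k)
    (h : LowerLoc g u K j) :
    ∀ t, 0 < t → t < μ → g (u - t • eVec K) j < g u j := by
  obtain ⟨δ, hδ, hs⟩ := h
  intro t ht htμ
  have h1 : g (u - t • eVec K) j ≤ g (u - min t (δ/2) • eVec K) j :=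
    path_mono hg u K (le_of_lt (lt_min ht (by linarith))) (min_le_left _ _)
      (fun k => htμ.le.trans (hμle k)) j
  have h2 := hs (min t (δ/2)) (lt_min ht (by linarith))
    (lt_of_le_of_lt (min_le_right _ _) (by linarith))
  exact lt_of_le_of_lt h1 h2

/-- If the lower local signature fails, then there is `t₁ > 0` below which
coordinate `j` stays *equal*. -/
lemma lowerLoc_neg {n : ℕ} {g : Vec n → Vec n} (hg : IsMTopical g) {u : Vec n}
    {K : Set (Fin n)} {j : Fin n} {μ : ℝ} (hμ : 0 < μ) (hμle : ∀ k, μ ≤ u k)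
    (h : ¬ LowerLoc g u K j) :
    ∃ t₁, 0 < t₁ ∧ t₁ < μ ∧ ∀ t, 0 < t → t ≤ t₁ → g (u - t • eVec K) j = g u j := by
  unfold LowerLoc at h
  push_neg at h
  obtain ⟨t₁, ht₁, ht₁μ, hge⟩ := h μ hμ
  have hle : g (u - t₁ • eVec K) j ≤ g u j :=
    path_le hg u K ht₁.le (fun k => ht₁μ.le.trans (hμle k)) j
  have heq : g (u - t₁ • eVec K) j = g u j := le_antisymm hle hge
  refine ⟨t₁, ht₁, ht₁μ, fun t ht htt₁ => ?_⟩
  have h1 : g (u - t₁ • eVec K) j ≤ g (u - t • eVec K) j :=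
    path_mono hg u K ht.le htt₁ (fun k => ht₁μ.le.trans (hμle k)) j
  have h2 : g (u - t • eVec K) j ≤ g u j :=
    path_le hg u K ht.le (fun k => (htt₁.trans ht₁μ.le).trans (hμle k)) j
  rw [heq] at h1
  linarith

/-- The lower local signature of a composition is the composition of the lower local
signatures. -/
theorem lowerLocalSignature_comp {n : ℕ} (hn : 0 < n) (f g : Vec n → Vec n)
    (hf : IsMTopical f) (hg : IsMTopical g) (u : Vec n) (hu : Pos u) :
    ∀ J : Set (Fin n), ∀ i : Fin n,
      LowerLoc (fun x => f (g x)) u J i ↔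
        LowerLoc f (g u) {j : Fin n | LowerLoc g u J j} i := by
  intro J i
  classical
  have hne : Nonempty (Fin n) := ⟨⟨0, hn⟩⟩
  set v := g u with hv
  set I := {j : Fin n | LowerLoc g u J j} with hIdef
  have hmemI : ∀ j, j ∈ I ↔ LowerLoc g u J j := fun j => Iff.rfl
  have hvpos : Pos v := hg.map_pos u hu
  obtain ⟨m, hm, hmle⟩ : ∃ m : ℝ, 0 < m ∧ ∀ k, m ≤ u k :=
    ⟨Finset.univ.inf' Finset.univ_nonempty u,
      (Finset.lt_inf'_iff _).mpr fun j _ => hu j,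
      fun k => Finset.inf'_le _ (Finset.mem_univ k)⟩
  obtain ⟨εv, hεv, hεvle⟩ : ∃ e : ℝ, 0 < e ∧ ∀ k, e ≤ v k :=
    ⟨Finset.univ.inf' Finset.univ_nonempty v,
      (Finset.lt_inf'_iff _).mpr fun j _ => hvpos j,
      fun k => Finset.inf'_le _ (Finset.mem_univ k)⟩
  have key : ∀ j : Fin n, ∃ t₁ : ℝ, 0 < t₁ ∧ t₁ < m ∧
      (¬ LowerLoc g u J j → ∀ t, 0 < t → t ≤ t₁ → g (u - t • eVec J) j = g u j) := by
    intro j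
    by_cases hj : LowerLoc g u J j
    · exact ⟨m / 2, by linarith, by linarith, fun h => absurd hj h⟩
    · obtain ⟨t₁, h1, h2, h3⟩ := lowerLoc_neg hg hm hmle hj
      exact ⟨t₁, h1, h2, fun _ => h3⟩
  choose tt htt0 httm htteq using key
  set δ₁ := Finset.univ.inf' Finset.univ_nonempty tt with hδ₁def
  have hδ₁pos : 0 < δ₁ := (Finset.lt_inf'_iff _).mpr fun j _ => htt0 j
  have hδ₁le : ∀ j, δ₁ ≤ tt j := fun j => Finset.inf'_le _ (Finset.mem_univ j)
  have hδ₁m : δ₁ < m := lt_of_le_of_lt (hδ₁le ⟨0, hn⟩) (httm _)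
  have hdich : ∀ t, 0 < t → t < δ₁ → ∀ j,
      (LowerLoc g u J j → g (u - t • eVec J) j < g u j) ∧
      (¬ LowerLoc g u J j → g (u - t • eVec J) j = g u j) := by
    intro t ht htδ j
    refine ⟨fun hj => lowerLoc_all hg hmle hj t ht (htδ.trans hδ₁m),
      fun hj => htteq j hj t ht (le_of_lt (htδ.trans_le (hδ₁le j)))⟩
  constructor
  · rintro ⟨δ, hδ0, hδ⟩
    refine ⟨εv, hεv, fun s hs hsε => ?_⟩
    -- continuity of g along the path
    have hcont : ContinuousWithinAt g {x : Vec n | Nonneg x} u :=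
      hg.contOn u (fun k => (hu k).le)
    have hp1 : Tendsto (fun t : ℝ => u - t • eVec J) (𝓝[>] (0 : ℝ)) (𝓝 u) := by
      have hc : Continuous (fun t : ℝ => u - t • eVec J) := by continuity
      have := hc.tendsto 0
      simp only [zero_smul, sub_zero] at this
      exact this.mono_left nhdsWithin_le_nhds
    have hp2 : ∀ᶠ t in 𝓝[>] (0 : ℝ), (u - t • eVec J) ∈ {x : Vec n | Nonneg x} := by
      filter_upwards [Ioo_mem_nhdsGT_of_mem (left_mem_Ico.mpr hm)] with t ht
      exact sub_eVec_nonneg J ht.1.le (fun k => ht.2.le.trans (hmle k))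
    have hpath : Tendsto (fun t : ℝ => g (u - t • eVec J)) (𝓝[>] (0 : ℝ)) (𝓝 v) :=
      hcont.tendsto.comp (tendsto_nhdsWithin_iff.mpr ⟨hp1, hp2⟩)
    have hclose : ∀ᶠ t in 𝓝[>] (0 : ℝ), ∀ j, v j - s < g (u - t • eVec J) j := by
      rw [eventually_all]
      intro j
      have hj : Tendsto (fun t : ℝ => g (u - t • eVec J) j) (𝓝[>] (0 : ℝ)) (𝓝 (v j)) :=
        ((continuous_apply j).tendsto v).comp hpath
      exact hj.eventually (eventually_gt_nhds (by linarith))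
    have hsmall : ∀ᶠ t in 𝓝[>] (0 : ℝ), 0 < t ∧ t < δ ∧ t < δ₁ := by
      filter_upwards [Ioo_mem_nhdsGT_of_mem
        (left_mem_Ico.mpr (lt_min hδ0 hδ₁pos))] with t ht
      exact ⟨ht.1, lt_of_lt_of_le ht.2 (min_le_left _ _),
        lt_of_lt_of_le ht.2 (min_le_right _ _)⟩
    obtain ⟨t, hclose, ht0, htδ, htδ₁⟩ := (hclose.and hsmall).exists
    set w := g (u - t • eVec J) with hw
    have hwnn : Nonneg w := hg.map_nonneg _
      (sub_eVec_nonneg J ht0.le (fun k => (htδ₁.trans hδ₁m).le.trans (hmle k)))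
    have hle : v - s • eVec I ≤ w := by
      intro j
      by_cases hj : LowerLoc g u J j
      · have h1 := hclose j
        have he : eVec I j = 1 := by exact eVec_mem hj
        simp only [sub_eVec_apply, he, mul_one]
        linarith
      · have heq := (hdich t ht0 htδ₁ j).2 hj
        have he : eVec I j = 0 := by exact eVec_not_mem hj
        simp only [sub_eVec_apply, he, mul_zero]
        rw [sub_zero, hw, heq, hv]
    have hnn : Nonneg (v - s • eVec I) :=
      sub_eVec_nonneg I hs.le (fun k => hsε.le.trans (hεvle k))
    have hmono := hf.mono _ _ hnn hwnn hle
    have hlt : f w i < f v i := hδ t ht0 htδ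
    exact lt_of_le_of_lt (hmono i) hlt
  · rintro ⟨δ, hδ0, hδ⟩
    refine ⟨δ₁, hδ₁pos, fun t ht htδ₁ => ?_⟩
    show f (g (u - t • eVec J)) i < f (g u) i
    set w := g (u - t • eVec J) with hw
    have hwnn : Nonneg w := hg.map_nonneg _
      (sub_eVec_nonneg J ht.le (fun k => (htδ₁.trans hδ₁m).le.trans (hmle k)))
    by_cases hIne : ∃ j, LowerLoc g u J j
    · obtain ⟨j₀, hj₀⟩ := hIne
      set S : Finset (Fin n) := Finset.univ.filter (fun j => LowerLoc g u J j) with hS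
      have hSne : S.Nonempty := ⟨j₀, by simp [hS, hj₀]⟩
      set s0 := S.inf' hSne (fun j => v j - w j) with hs0
      have hs0pos : 0 < s0 := by
        rw [hs0, Finset.lt_inf'_iff]
        intro j hj
        have hjI : LowerLoc g u J j := by simpa [hS] using hj
        have := (hdich t ht htδ₁ j).1 hjI
        rw [hw]
        linarith
      have hs0le : ∀ j, LowerLoc g u J j → s0 ≤ v j - w j := fun j hj =>
        Finset.inf'_le _ (by simp [hS, hj])
      have hs'0 : 0 < min (δ / 2) s0 := lt_min (by linarith) hs0pos
      have hle : w ≤ v - min (δ / 2) s0 • eVec I := by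
        intro j
        by_cases hj : LowerLoc g u J j
        · have h1 := hs0le j hj
          have he : eVec I j = 1 := by exact eVec_mem hj
          simp only [sub_eVec_apply, he, mul_one]
          have h2 : min (δ / 2) s0 ≤ s0 := min_le_right _ _
          linarith
        · have heq := (hdich t ht htδ₁ j).2 hj
          have he : eVec I j = 0 := by exact eVec_not_mem hj
          simp only [sub_eVec_apply, he, mul_zero]
          rw [hw, heq, hv, sub_zero]
      have hnn : Nonneg (v - min (δ / 2) s0 • eVec I) := fun j => (hwnn j).trans (hle j)
      have hmono := hf.mono _ _ hwnn hnn hle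
      have hlt := hδ (min (δ / 2) s0) hs'0
        (lt_of_le_of_lt (min_le_left _ _) (by linarith))
      exact lt_of_le_of_lt (hmono i) hlt
    · have he : eVec I = 0 := by
        funext k
        exact eVec_not_mem (fun hk => hIne ⟨k, hk⟩)
      have hlt := hδ (δ / 2) (by linarith) (by linarith)
      rw [he] at hlt
      simp only [smul_zero, sub_zero] at hlt
      exact absurd hlt (lt_irrefl _)
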